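/- arXiv:1004.1489 — 3 statements merged into one kernel-verified Lean document; each statement's English description precedes it below -/
import Mathlib

section
/- For any ρ > 0, λ₁₀ ≥ 0, real constants r and b, the function h(π) = (r/ρ - 1 + log ρ + λ₁₀ b + log(1 - π^(1+λ₁₀/ρ)))/(ρ + λ₁₀) satisfies the ODE -(ρ + λ₁₀)h(π) + r/ρ - 1 + λ₁₀ b - log(ρ⁻¹ - π h'(π)) = 0 for all π ∈ (0,1). -/
/-! With `α = 1 + λ₁₀/ρ` one has `ρ + λ₁₀ = ρ α`, so `h = (C + log (1 - π^α)) / (ρ α)` and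
`ρ⁻¹ - π h'(π) = (ρ (1 - π^α))⁻¹`. Taking logarithms, the `log (1 - π^α)` and `log ρ` terms
cancel against those in `(ρ + λ₁₀) h(π)`. -/

open Set Real

theorem hasDerivAt_log_one_sub_rpow {α p : ℝ} (hp : 0 < p) (hpα : p ^ α ≠ 1) :
    HasDerivAt (fun x : ℝ => log (1 - x ^ α)) (-(α * p ^ (α - 1)) / (1 - p ^ α)) p := by
  have hrpow := hasDerivAt_rpow_const (p := α) (Or.inl hp.ne')
  simpa using ((hasDerivAt_const p (1 : ℝ)).sub hrpow).log (sub_ne_zero.mpr hpα.symm)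

theorem inv_sub_mul_deriv_log_one_sub_rpow {ρ α C p : ℝ} (hρ : 0 < ρ) (hα : 0 < α)
    (hp : p ∈ Ioo (0 : ℝ) 1) :
    ρ⁻¹ - p * deriv (fun x : ℝ => (C + log (1 - x ^ α)) / (ρ * α)) p
      = (ρ * (1 - p ^ α))⁻¹ := by
  have hpα : p ^ α < 1 := rpow_lt_one hp.1.le hp.2 hα
  have hderiv := ((hasDerivAt_log_one_sub_rpow hp.1 hpα.ne).const_add C).div_const (ρ * α)
  have hp_mul : p * p ^ (α - 1) = p ^ α := by
    rw [mul_comm, ← rpow_add_one hp.1.ne', sub_add_cancel]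
  rw [hderiv.deriv]
  field_simp [(sub_pos.mpr hpα).ne', hα.ne']
  linear_combination hp_mul

theorem stmt_1 (ρ l10 r b : ℝ) (hρ : 0 < ρ) (hl : 0 ≤ l10)
    (h : ℝ → ℝ)
    (hh : ∀ p : ℝ, h p =
      (r/ρ - 1 + Real.log ρ + l10 * b + Real.log (1 - p ^ (1 + l10/ρ))) / (ρ + l10)) :
    ∀ p ∈ Ioo (0:ℝ) 1,
      -(ρ + l10) * h p + r/ρ - 1 + l10 * b - Real.log (ρ⁻¹ - p * deriv h p) = 0 := by
  intro p hp
  set α := 1 + l10 / ρ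
  have hα : 0 < α := by positivity
  have hρα : ρ + l10 = ρ * α := by simp only [α]; field_simp
  have hpα : 0 < 1 - p ^ α := sub_pos.mpr (rpow_lt_one hp.1.le hp.2 hα)
  have h_eq : h = fun x => (r/ρ - 1 + log ρ + l10 * b + log (1 - x ^ α)) / (ρ * α) := by
    funext x; rw [hh x, hρα]
  rw [h_eq, inv_sub_mul_deriv_log_one_sub_rpow hρ hα hp, log_inv, log_mul hρ.ne' hpα.ne', hρα]
  field_simp
  ring
end

section
/- For every constant C with 0 < C ≤ 1, the function h(π) = h₀ + (1/(ρ+λ₁₀)) log(1 - C π^(1+λ₁₀/ρ)), where h₀ = (r/ρ - 1 + log ρ + λ₁₀ b)/(ρ + λ₁₀), solves the ODE -(ρ + λ₁₀)h + r/ρ - 1 + λ₁₀ b - log(ρ⁻¹ - π h'(π)) = 0 on (0,1); moreover among these solutions only C = 1 yields lim_{π→1⁻} h(π) = -∞. -/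
open Set Real Filter
open scoped Topology

/-
With α = 1 + λ₁₀/ρ one has 1/(ρ + λ₁₀) = ρ⁻¹/α, so h = h₀ + (ρ⁻¹/α) log(1 - C π^α) and
ρ⁻¹ - π h'(π) = ρ⁻¹ / (1 - C π^α). Taking logarithms, the ODE reduces to the defining equation
of h₀. At π = 1 the argument 1 - C π^α tends to 1 - C, which is positive unless C = 1, and the
logarithm diverges to -∞ exactly when this limit is 0.
-/

lemma one_sub_mul_rpow_pos {C α p : ℝ} (hC : C ≤ 1) (hα : 0 < α) (hp : p ∈ Ioo (0:ℝ) 1) :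
    0 < 1 - C * p ^ α := by
  have hpα : p ^ α < 1 := rpow_lt_one hp.1.le hp.2 hα
  have : C * p ^ α ≤ p ^ α := mul_le_of_le_one_left (rpow_pos_of_pos hp.1 α).le hC
  linarith

lemma hasDerivAt_log_one_sub_mul_rpow {C α p : ℝ} (hp : 0 < p) (hu : 1 - C * p ^ α ≠ 0) :
    HasDerivAt (fun x => log (1 - C * x ^ α)) (-(C * (α * p ^ (α - 1))) / (1 - C * p ^ α)) p := by
  have hpow : HasDerivAt (fun x : ℝ => x ^ α) (α * p ^ (α - 1)) p :=
    hasDerivAt_rpow_const (Or.inl hp.ne')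
  simpa using ((hpow.const_mul C).const_sub 1).log hu

lemma sub_mul_deriv_log_one_sub_mul_rpow {c α C h₀ p : ℝ} (hα : α ≠ 0) (hp : 0 < p)
    (hu : 1 - C * p ^ α ≠ 0) :
    c - p * deriv (fun x => h₀ + c / α * log (1 - C * x ^ α)) p = c / (1 - C * p ^ α) := by
  rw [(((hasDerivAt_log_one_sub_mul_rpow hp hu).const_mul (c / α)).const_add h₀).deriv]
  have hpow : p * p ^ (α - 1) = p ^ α := by
    rw [mul_comm, ← rpow_add_one hp.ne', sub_add_cancel]
  field_simp
  linear_combination c * C * hpow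

lemma tendsto_log_one_sub_rpow_nhdsLT_one {α : ℝ} (hα : 0 < α) :
    Tendsto (fun p => log (1 - p ^ α)) (𝓝[<] 1) atBot := by
  refine tendsto_log_nhdsGT_zero.comp (tendsto_nhdsWithin_iff.2 ⟨?_, ?_⟩)
  · have hcont : ContinuousAt (fun p : ℝ => 1 - p ^ α) 1 :=
      continuousAt_const.sub (continuousAt_rpow_const 1 α (Or.inl one_ne_zero))
    simpa using hcont.tendsto.mono_left nhdsWithin_le_nhds
  · filter_upwards [Ioo_mem_nhdsLT_of_mem ⟨zero_lt_one, le_refl (1:ℝ)⟩] with p hp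
    simpa using one_sub_mul_rpow_pos le_rfl hα hp

lemma tendsto_log_one_sub_mul_rpow_of_lt_one {C α : ℝ} (hC : C < 1) :
    Tendsto (fun p => log (1 - C * p ^ α)) (𝓝[<] 1) (𝓝 (log (1 - C))) := by
  have hcont : ContinuousAt (fun p : ℝ => log (1 - C * p ^ α)) 1 := by
    refine (continuousAt_const.sub
      (continuousAt_const.mul (continuousAt_rpow_const 1 α (Or.inl one_ne_zero)))).log ?_
    show (1:ℝ) - C * 1 ^ α ≠ 0
    rw [one_rpow, mul_one]
    linarith
  simpa using hcont.tendsto.mono_left nhdsWithin_le_nhds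

theorem stmt_2 (ρ l10 r b C : ℝ) (hρ : 0 < ρ) (hl : 0 ≤ l10)
    (hC : C ∈ Ioc (0:ℝ) 1)
    (h0 : ℝ) (hh0 : h0 = (r/ρ - 1 + Real.log ρ + l10 * b) / (ρ + l10))
    (h : ℝ → ℝ)
    (hh : ∀ p : ℝ, h p = h0 + (1/(ρ + l10)) * Real.log (1 - C * p ^ (1 + l10/ρ))) :
    (∀ p ∈ Ioo (0:ℝ) 1,
      -(ρ + l10) * h p + r/ρ - 1 + l10 * b - Real.log (ρ⁻¹ - p * deriv h p) = 0) ∧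
    (Tendsto h (nhdsWithin 1 (Iio 1)) atBot ↔ C = 1) := by
  have hs : 0 < ρ + l10 := add_pos_of_pos_of_nonneg hρ hl
  set α := 1 + l10 / ρ
  have hα : 0 < α := by positivity
  have hcoef : 1 / (ρ + l10) = ρ⁻¹ / α := by simp only [α]; field_simp
  obtain rfl : h = fun p => h0 + ρ⁻¹ / α * log (1 - C * p ^ α) := funext fun p => by
    rw [hh, hcoef]
  refine ⟨fun p hp => ?_, ⟨fun htend => ?_, fun hC1 => ?_⟩⟩
  · have hu := one_sub_mul_rpow_pos hC.2 hα hp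
    rw [sub_mul_deriv_log_one_sub_mul_rpow hα.ne' hp.1 hu.ne', log_div (by positivity) hu.ne',
      log_inv, ← hcoef, hh0]
    field_simp
    ring
  · by_contra hne
    have hlim := ((tendsto_log_one_sub_mul_rpow_of_lt_one (α := α)
      (lt_of_le_of_ne hC.2 hne)).const_mul (ρ⁻¹ / α)).const_add h0
    exact not_tendsto_atBot_of_tendsto_nhds hlim htend
  · subst hC1
    simpa using tendsto_atBot_add_const_left _ h0
      ((tendsto_log_one_sub_rpow_nhdsLT_one hα).const_mul_atBot (by positivity))
end

section
/- For the function ζ(π) = ((μ-r)π - π²σ²/2)/ρ + (λ₀₁/(ρ+λ₁₀)) log(1 - g(π)^(1+λ₁₀/ρ)) + (λ₀₁/ρ) log(1 - πL) on [0,1), with g(π) = π(1-L)/(1-πL), if λ₀₁ = 0 the unique maximizer of ζ over [0,1] ∩ [0, ∞) is π̂ = (μ-r)/σ² (assuming 0 < (μ-r)/σ² < 1); and for λ₀₁ > 0 every maximizer π* of ζ satisfies π* < π̂. -/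
/-!
Without liquidity shocks `ζ` is the concave quadratic `(σ²/2ρ)(π̂² - (π - π̂)²)`, maximised
exactly at `π̂`. With `λ₀₁ > 0` the two logarithmic terms have strictly negative derivative on
`(0, 1)` (the first because `g` is increasing with values in `(0, 1)`), while the quadratic has
non-positive derivative on `[π̂, 1)`. So `ζ' < 0` on `[π̂, 1)`, and no interior maximiser can lie there.
-/

open Set Real

lemma quadratic_vertex_sub_eq (a s ρ p : ℝ) (hs : s ≠ 0) :
    (a * (a / s) - (a / s) ^ 2 * s / 2) / ρ - (a * p - p ^ 2 * s / 2) / ρ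
      = s * (p - a / s) ^ 2 / (2 * ρ) := by
  field_simp
  ring

lemma hasDerivAt_quadratic (a s ρ x : ℝ) :
    HasDerivAt (fun p : ℝ => (a * p - p ^ 2 * s / 2) / ρ) ((a - x * s) / ρ) x := by
  refine ((((hasDerivAt_id x).const_mul a).sub
    (((hasDerivAt_pow 2 x).mul_const s).div_const 2)).div_const ρ).congr_deriv ?_
  ring

lemma hasDerivAt_mul_one_sub_div_one_sub_mul {L x : ℝ} (hx : 1 - x * L ≠ 0) :
    HasDerivAt (fun p : ℝ => p * (1 - L) / (1 - p * L)) ((1 - L) / (1 - x * L) ^ 2) x := by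
  refine (((hasDerivAt_id x).mul_const (1 - L)).div
    (((hasDerivAt_id x).mul_const L).const_sub 1) hx).congr_deriv ?_
  simp only [id]
  ring

lemma mul_one_sub_div_one_sub_mul_mem_Ioo {L x : ℝ} (hL : L ∈ Ico (0 : ℝ) 1)
    (hx : x ∈ Ioo (0 : ℝ) 1) : x * (1 - L) / (1 - x * L) ∈ Ioo (0 : ℝ) 1 := by
  obtain ⟨hL0, hL1⟩ := hL
  obtain ⟨hx0, hx1⟩ := hx
  have hden : 0 < 1 - x * L := by nlinarith
  exact ⟨div_pos (by nlinarith) hden, (div_lt_one hden).2 (by nlinarith)⟩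

lemma exists_hasDerivAt_log_one_sub_rpow_neg {f : ℝ → ℝ} {f' x α : ℝ}
    (hf : HasDerivAt f f' x) (hf' : 0 < f') (hfx : f x ∈ Ioo (0 : ℝ) 1) (hα : 0 < α) :
    ∃ d < 0, HasDerivAt (fun y => log (1 - f y ^ α)) d x := by
  obtain ⟨h0, h1⟩ := hfx
  have hlt : f x ^ α < 1 := rpow_lt_one h0.le h1 hα
  refine ⟨-(f' * α * f x ^ (α - 1)) / (1 - f x ^ α), ?_,
    ((hf.rpow_const (Or.inl h0.ne')).const_sub 1).log (by linarith)⟩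
  have : 0 < f' * α * f x ^ (α - 1) := by have := rpow_pos_of_pos h0 (α - 1); positivity
  exact div_neg_of_neg_of_pos (by linarith) (by linarith)

lemma exists_hasDerivAt_liquidity_penalty_neg {L α c₁ c₂ x : ℝ} (hL : L ∈ Ico (0 : ℝ) 1)
    (hx : x ∈ Ioo (0 : ℝ) 1) (hα : 0 < α) (hc₁ : 0 < c₁) (hc₂ : 0 ≤ c₂) :
    ∃ d < 0, HasDerivAt
      (fun p => c₁ * log (1 - (p * (1 - L) / (1 - p * L)) ^ α) + c₂ * log (1 - p * L)) d x := by
  have hden : 0 < 1 - x * L := by nlinarith [hL.1, hL.2, hx.1, hx.2]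
  obtain ⟨d, hd, hlog⟩ := exists_hasDerivAt_log_one_sub_rpow_neg
    (hasDerivAt_mul_one_sub_div_one_sub_mul hden.ne')
    (div_pos (by linarith [hL.2]) (by positivity)) (mul_one_sub_div_one_sub_mul_mem_Ioo hL hx) hα
  have hlogL := (((hasDerivAt_id x).mul_const L).const_sub 1).log hden.ne'
  refine ⟨_, ?_, (hlog.const_mul c₁).add (hlogL.const_mul c₂)⟩
  have : c₂ * (-(1 * L) / (1 - x * L)) ≤ 0 :=
    mul_nonpos_of_nonneg_of_nonpos hc₂ <|
      div_nonpos_of_nonpos_of_nonneg (by linarith [hL.1]) hden.le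
  have : c₁ * d < 0 := mul_neg_of_pos_of_neg hc₁ hd
  simp only [id]
  linarith

theorem stmt_6_general (μ r σ ρ l10 L : ℝ) (hσ : 0 < σ) (hρ : 0 < ρ)
    (hl10 : 0 ≤ l10) (hL : L ∈ Ico (0:ℝ) 1)
    (phat : ℝ) (hphat : phat = (μ - r)/σ^2) (hp : phat ∈ Ioo (0:ℝ) 1)
    (g : ℝ → ℝ) (hg : ∀ p, g p = p * (1-L) / (1 - p*L))
    (ζ : ℝ → ℝ → ℝ)
    (hζ : ∀ l01 p, ζ l01 p = ((μ-r)*p - p^2*σ^2/2)/ρ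
        + (l01/(ρ+l10)) * Real.log (1 - (g p) ^ (1 + l10/ρ))
        + (l01/ρ) * Real.log (1 - p*L)) :
    (IsMaxOn (ζ 0) (Icc 0 1) phat ∧
      (∀ p ∈ Icc (0:ℝ) 1, IsMaxOn (ζ 0) (Icc 0 1) p → p = phat)) ∧
    (∀ l01 > (0:ℝ), ∀ ps ∈ Ico (0:ℝ) 1, IsMaxOn (ζ l01) (Ico 0 1) ps → ps < phat) := by
  have hσ2 : σ ^ 2 ≠ 0 := by positivity
  have hgap (p : ℝ) : ζ 0 phat - ζ 0 p = σ ^ 2 * (p - phat) ^ 2 / (2 * ρ) := by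
    simpa [hζ, hphat] using quadratic_vertex_sub_eq (μ - r) (σ ^ 2) ρ p hσ2
  refine ⟨⟨fun p _ => ?_, fun p _ hmax => ?_⟩, fun l01 hl01 ps hps hmax => ?_⟩
  · have : 0 ≤ σ ^ 2 * (p - phat) ^ 2 / (2 * ρ) := by positivity
    show ζ 0 p ≤ ζ 0 phat
    linarith [hgap p]
  · have hle : ζ 0 phat ≤ ζ 0 p := hmax ⟨hp.1.le, hp.2.le⟩
    have : σ ^ 2 * (p - phat) ^ 2 / (2 * ρ) = 0 :=
      le_antisymm (by linarith [hgap p]) (by positivity)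
    simpa [hσ2, hρ.ne', sub_eq_zero] using this
  by_contra! hge
  have hps' : ps ∈ Ioo (0 : ℝ) 1 := ⟨hp.1.trans_le hge, hps.2⟩
  have hquad : (μ - r - ps * σ ^ 2) / ρ ≤ 0 := by
    have : μ - r = phat * σ ^ 2 := by rw [hphat]; field_simp
    exact div_nonpos_of_nonpos_of_nonneg (by nlinarith) hρ.le
  obtain ⟨d, hd, hpenalty⟩ := exists_hasDerivAt_liquidity_penalty_neg hL hps'
    (by positivity : 0 < 1 + l10 / ρ) (by positivity : 0 < l01 / (ρ + l10))
    (by positivity : 0 ≤ l01 / ρ)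
  have hderiv : HasDerivAt (ζ l01) _ ps :=
    ((hasDerivAt_quadratic (μ - r) (σ ^ 2) ρ ps).add hpenalty).congr_of_eventuallyEq <|
      .of_forall fun p => by rw [hζ, hg, Pi.add_apply, add_assoc]
  have hzero := (hmax.isLocalMax (Ico_mem_nhds hps'.1 hps'.2)).hasDerivAt_eq_zero hderiv
  linarith

theorem stmt_6 (μ r σ ρ l10 L : ℝ) (hμ : r < μ) (hσ : 0 < σ) (hρ : 0 < ρ)
    (hl10 : 0 ≤ l10) (hL : L ∈ Ico (0:ℝ) 1)
    (phat : ℝ) (hphat : phat = (μ - r)/σ^2) (hp : phat ∈ Ioo (0:ℝ) 1)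
    (g : ℝ → ℝ) (hg : ∀ p, g p = p * (1-L) / (1 - p*L))
    (ζ : ℝ → ℝ → ℝ)
    (hζ : ∀ l01 p, ζ l01 p = ((μ-r)*p - p^2*σ^2/2)/ρ
        + (l01/(ρ+l10)) * Real.log (1 - (g p) ^ (1 + l10/ρ))
        + (l01/ρ) * Real.log (1 - p*L)) :
    (IsMaxOn (ζ 0) (Icc 0 1) phat ∧
      (∀ p ∈ Icc (0:ℝ) 1, IsMaxOn (ζ 0) (Icc 0 1) p → p = phat)) ∧
    (∀ l01 > (0:ℝ), ∀ ps ∈ Ico (0:ℝ) 1, IsMaxOn (ζ l01) (Ico 0 1) ps → ps < phat) :=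
  stmt_6_general μ r σ ρ l10 L hσ hρ hl10 hL phat hphat hp g hg ζ hζ
end
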